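/- arXiv:2011.03738 — 6 statements merged into one kernel-verified Lean document; each statement's English description precedes it below -/
import Mathlib

section
/- Let (G, λ) be a simple temporal graph with temporal source v, and let T be a subtree containing v such that for every vertex u of T, the unique temporal (v,u)-path in T is a foremost (earliest-arrival) temporal (v,u)-path in (G, λ). If T does not yet span all of V(G), then there exists an edge e with exactly one endpoint in V(T) and the other outside V(T) such that T ∪ {e} is again an increasing temporal tree rooted at v. -/
/-- Temporal reachability: `TReachFrom G lab t u v` means there is a temporal
(non-decreasing-label) walk from `u` to `v` in `G` whose first edge has label `≥ t`. -/
inductive TReachFrom {V : Type*} (G : SimpleGraph V) (lab : Sym2 V → ℝ) : ℝ → V → V → Prop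
  | refl (t : ℝ) (v : V) : TReachFrom G lab t v v
  | step {t : ℝ} {u v w : V} : G.Adj u v → t ≤ lab s(u, v) →
      TReachFrom G lab (lab s(u, v)) v w → TReachFrom G lab t u w

/-- `u` reaches `v` by a temporal path. -/
def TReach {V : Type*} (G : SimpleGraph V) (lab : Sym2 V → ℝ) (u v : V) : Prop :=
  ∃ t, TReachFrom G lab t u v

/-- `v` is a temporal source: it reaches every vertex by a temporal path. -/
def TSource {V : Type*} (G : SimpleGraph V) (lab : Sym2 V → ℝ) (v : V) : Prop :=
  ∀ u, TReach G lab v u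

/-- `v` is a temporal sink: every vertex reaches it by a temporal path. -/
def TSink {V : Type*} (G : SimpleGraph V) (lab : Sym2 V → ℝ) (v : V) : Prop :=
  ∀ u, TReach G lab u v
/-- `x` is a vertex of the greedily grown tree (rooted at `v`, with edge sequence `e`)
after `k` steps: it is the root or the new endpoint of one of the first `k` edges. -/
def InTree {V : Type*} (v : V) (e : ℕ → V × V) (k : ℕ) (x : V) : Prop :=
  x = v ∨ ∃ i < k, (e i).2 = x

/-- Adding the edge `(a, b)` (with `a` in the tree after `k` steps, `b` outside) keeps
the tree an increasing temporal tree rooted at `v`: either `a` is the root, or the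
label of `(a,b)` is at least the arrival time (label of the tree edge) of `a`. -/
def ExtIncr {V : Type*} (lab : Sym2 V → ℝ) (v : V) (e : ℕ → V × V) (k : ℕ)
    (a b : V) : Prop :=
  a = v ∨ ∃ j < k, (e j).2 = a ∧ lab s((e j).1, (e j).2) ≤ lab s(a, b)
/-- `TReachArr G lab t u w a`: there is a (nonempty) temporal path from `u` to `w`
whose first edge has label `≥ t` and whose arrival time (last label) is `a`. -/
inductive TReachArr {V : Type*} (G : SimpleGraph V) (lab : Sym2 V → ℝ) :
    ℝ → V → V → ℝ → Prop
  | single {t : ℝ} {u w : V} : G.Adj u w → t ≤ lab s(u, w) →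
      TReachArr G lab t u w (lab s(u, w))
  | step {t : ℝ} {u w x : V} {a : ℝ} : G.Adj u w → t ≤ lab s(u, w) →
      TReachArr G lab (lab s(u, w)) w x a → TReachArr G lab t u x a

/-- There is a temporal path from `u` to `w` with arrival time `a`. -/
def ReachArr {V : Type*} (G : SimpleGraph V) (lab : Sym2 V → ℝ) (u w : V) (a : ℝ) : Prop :=
  ∃ t, TReachArr G lab t u w a

/-- `a` is the arrival time of a foremost temporal path from `u` to `w`. -/
def Foremost {V : Type*} (G : SimpleGraph V) (lab : Sym2 V → ℝ) (u w : V) (a : ℝ) : Prop :=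
  ReachArr G lab u w a ∧ ∀ a', ReachArr G lab u w a' → a ≤ a'

private lemma TReachArr.append {V : Type*} {G : SimpleGraph V} {lab : Sym2 V → ℝ}
    {t a : ℝ} {u w x : V} (h : TReachArr G lab t u w a) (hadj : G.Adj w x)
    (hle : a ≤ lab s(w, x)) : TReachArr G lab t u x (lab s(w, x)) := by
  induction h with
  | single h1 h2 => exact TReachArr.step h1 h2 (TReachArr.single hadj hle)
  | step h1 h2 _ ih => exact TReachArr.step h1 h2 (ih hadj hle)

private lemma key_lemma {V : Type*} (G : SimpleGraph V) (lab : Sym2 V → ℝ)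
    (v : V) (m : ℕ) (e : ℕ → V × V)
    (hforemost : ∀ i < m, Foremost G lab v (e i).2 (lab s((e i).1, (e i).2)))
    (u : V) :
    ∀ t x, TReachFrom G lab t x u → ¬ InTree v e m u → InTree v e m x →
      (x = v ∨ ∃ a', ReachArr G lab v x a' ∧ a' ≤ t) →
      ∃ a b : V, G.Adj a b ∧ InTree v e m a ∧ ¬ InTree v e m b ∧
        ExtIncr lab v e m a b := by
  intro t x hreach
  induction hreach with
  | refl t x => intro hu hx _; exact absurd hx hu
  | @step t x w _ hadj hle _ ih =>
    intro hu hx hH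
    -- build a ReachArr from v to w with arrival lab s(x,w)
    have hRw : ReachArr G lab v w (lab s(x, w)) := by
      rcases hH with rfl | ⟨a', ⟨t0, hA⟩, ha'⟩
      · exact ⟨lab s(x, w), TReachArr.single hadj le_rfl⟩
      · exact ⟨t0, hA.append hadj (ha'.trans hle)⟩
    by_cases hw : InTree v e m w
    · exact ih hu hw (Or.inr ⟨lab s(x, w), hRw, le_rfl⟩)
    · refine ⟨x, w, hadj, hx, hw, ?_⟩
      rcases hx with rfl | ⟨j, hj, hje⟩
      · exact Or.inl rfl
      · rcases hH with rfl | ⟨a', hA, ha'⟩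
        · exact Or.inl rfl
        · refine Or.inr ⟨j, hj, hje, ?_⟩
          have := (hforemost j hj).2 a' (hje ▸ hA)
          exact this.trans (ha'.trans hle)

/-- Let `(G, lab)` be a simple temporal graph with temporal source `v`,
and let the tree grown by the edge sequence `e` (an increasing temporal tree rooted at
`v` after `m` steps) be such that for every vertex `u` of the tree, the tree path from
`v` to `u` is a foremost temporal `(v,u)`-path in `(G, lab)` (its arrival time being the
label of the tree edge ending at `u`). If the tree does not span all of `V`, then there
is an edge with exactly one endpoint in the tree that extends it to an increasing
temporal tree rooted at `v`. -/
theorem foremost_tree_extension {V : Type*} (G : SimpleGraph V) (lab : Sym2 V → ℝ)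
    (v : V) (hsource : TSource G lab v) (m : ℕ) (e : ℕ → V × V)
    (hadj : ∀ i < m, G.Adj (e i).1 (e i).2)
    (hin : ∀ i < m, InTree v e i (e i).1)
    (hout : ∀ i < m, ¬ InTree v e i (e i).2)
    (hext : ∀ i < m, ExtIncr lab v e i (e i).1 (e i).2)
    (hforemost : ∀ i < m, Foremost G lab v (e i).2 (lab s((e i).1, (e i).2)))
    (hnotspan : ∃ u : V, ¬ InTree v e m u) :
    ∃ a b : V, G.Adj a b ∧ InTree v e m a ∧ ¬ InTree v e m b ∧
      ExtIncr lab v e m a b := by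
  obtain ⟨u, hu⟩ := hnotspan
  obtain ⟨t, ht⟩ := hsource u
  exact key_lemma G lab v m e hforemost u t v ht hu (Or.inl rfl) (Or.inl rfl)
end

section
/- The greedy foremost-tree algorithm is correct: given a simple temporal graph (G, λ) with temporal source v, iteratively adding the minimum-label edge that extends the current tree to an increasing temporal tree rooted at v produces a spanning tree T such that for every vertex u, the temporal (v,u)-path in T is a foremost temporal (v,u)-path in (G, λ). -/
section Aux

variable {V : Type*} {G : SimpleGraph V} {lab : Sym2 V → ℝ}

lemma tarr_le {t : ℝ} {u w : V} {a : ℝ} (h : TReachArr G lab t u w a) : t ≤ a := by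
  induction h with
  | single _ hle => exact hle
  | step _ hle _ ih => exact hle.trans ih

lemma tarr_append {t : ℝ} {u w : V} {a : ℝ} {x : V} (h : TReachArr G lab t u w a) :
    G.Adj w x → a ≤ lab s(w, x) → TReachArr G lab t u x (lab s(w, x)) := by
  induction h with
  | single h1 h2 => exact fun hadj hle => .step h1 h2 (.single hadj hle)
  | step h1 h2 _ ih => exact fun hadj hle => .step h1 h2 (ih hadj hle)

lemma treach_to_arr {t : ℝ} {u w : V} (h : TReachFrom G lab t u w) :
    u ≠ w → ∃ a, TReachArr G lab t u w a := by
  induction h with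
  | refl t v => exact fun hne => absurd rfl hne
  | @step t u m w h1 h2 _ ih =>
    intro _
    by_cases hmw : m = w
    · subst hmw; exact ⟨_, .single h1 h2⟩
    · obtain ⟨a, ha⟩ := ih hmw
      exact ⟨a, .step h1 h2 ha⟩

lemma crossing {v : V} {e : ℕ → V × V} {k : ℕ}
    (hFor : ∀ j < k, Foremost G lab v (e j).2 (lab s((e j).1, (e j).2)))
    {t : ℝ} {u w : V} {a : ℝ} (h : TReachArr G lab t u w a) :
    (u = v ∨ ∃ j, j < k ∧ (e j).2 = u ∧ lab s((e j).1, (e j).2) ≤ t) →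
    ¬ InTree v e k w →
    ∃ p : V × V, G.Adj p.1 p.2 ∧ InTree v e k p.1 ∧ ¬ InTree v e k p.2 ∧
      ExtIncr lab v e k p.1 p.2 ∧ lab s(p.1, p.2) ≤ a := by
  induction h with
  | @single t u w h1 h2 =>
    intro hu hw
    refine ⟨(u, w), h1, ?_, hw, ?_, le_refl _⟩
    · rcases hu with h | ⟨j, hj, h, _⟩
      · exact Or.inl h
      · exact Or.inr ⟨j, hj, h⟩
    · rcases hu with h | ⟨j, hj, h, hle⟩
      · exact Or.inl h
      · exact Or.inr ⟨j, hj, h, hle.trans h2⟩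
  | @step t u m x a h1 h2 rest ih =>
    intro hu hw
    by_cases hm : InTree v e k m
    · rcases hm with hmv | ⟨j, hj, hje⟩
      · exact ih (Or.inl hmv) hw
      · subst hje
        have hreach : ReachArr G lab v (e j).2 (lab s(u, (e j).2)) := by
          rcases hu with huv | ⟨j', hj', hj'e, hle'⟩
          · subst huv; exact ⟨lab s(u, (e j).2), .single h1 le_rfl⟩
          · subst hj'e
            obtain ⟨t0, ht0⟩ := (hFor j' hj').1
            exact ⟨t0, tarr_append ht0 h1 (hle'.trans h2)⟩
        have hmin := (hFor j hj).2 _ hreach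
        exact ih (Or.inr ⟨j, hj, rfl, hmin⟩) hw
    · refine ⟨(u, m), h1, ?_, hm, ?_, tarr_le rest⟩
      · rcases hu with h | ⟨j, hj, h, _⟩
        · exact Or.inl h
        · exact Or.inr ⟨j, hj, h⟩
      · rcases hu with h | ⟨j, hj, h, hle⟩
        · exact Or.inl h
        · exact Or.inr ⟨j, hj, h, hle.trans h2⟩

lemma intree_congr {v : V} {e e' : ℕ → V × V} {k : ℕ} {x : V}
    (h : ∀ j < k, e j = e' j) : InTree v e k x ↔ InTree v e' k x := by
  unfold InTree
  constructor <;> rintro (rfl | ⟨i, hi, hx⟩)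
  · exact Or.inl rfl
  · exact Or.inr ⟨i, hi, by rw [← h i hi]; exact hx⟩
  · exact Or.inl rfl
  · exact Or.inr ⟨i, hi, by rw [h i hi]; exact hx⟩

lemma extincr_congr {v : V} {e e' : ℕ → V × V} {k : ℕ} {a b : V}
    (h : ∀ j < k, e j = e' j) : ExtIncr lab v e k a b ↔ ExtIncr lab v e' k a b := by
  unfold ExtIncr
  constructor <;> rintro (rfl | ⟨j, hj, h1, h2⟩)
  · exact Or.inl rfl
  · exact Or.inr ⟨j, hj, by rw [← h j hj]; exact ⟨h1, h2⟩⟩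
  · exact Or.inl rfl
  · exact Or.inr ⟨j, hj, by rw [h j hj]; exact ⟨h1, h2⟩⟩

/-- All the conditions maintained by the greedy algorithm for the first `k` edges. -/
def Good (G : SimpleGraph V) (lab : Sym2 V → ℝ) (v : V) (e : ℕ → V × V) (k : ℕ) : Prop :=
  ∀ i < k,
    G.Adj (e i).1 (e i).2 ∧ InTree v e i (e i).1 ∧ ¬ InTree v e i (e i).2 ∧
    ExtIncr lab v e i (e i).1 (e i).2 ∧
    (∀ a b : V, G.Adj a b → InTree v e i a → ¬ InTree v e i b →
      ExtIncr lab v e i a b → lab s((e i).1, (e i).2) ≤ lab s(a, b)) ∧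
    Foremost G lab v (e i).2 (lab s((e i).1, (e i).2))

lemma good_step [Fintype V] {v : V} (hsource : TSource G lab v) {e : ℕ → V × V} {k : ℕ}
    (hk : k + 1 ≤ Fintype.card V - 1) (hg : Good G lab v e k) :
    ∃ e', (∀ j < k, e j = e' j) ∧ Good G lab v e' (k + 1) := by
  classical
  have hFor : ∀ j < k, Foremost G lab v (e j).2 (lab s((e j).1, (e j).2)) :=
    fun j hj => (hg j hj).2.2.2.2.2
  -- the tree vertex set
  set S : Finset V := insert v ((Finset.range k).image fun i => (e i).2) with hS
  have hmemS : ∀ x, x ∈ S ↔ InTree v e k x := by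
    intro x
    simp [hS, InTree, Finset.mem_insert, Finset.mem_image, Finset.mem_range]
  -- there is a vertex outside the tree
  have hcard : S.card < Fintype.card V := by
    have h1 : S.card ≤ k + 1 := by
      calc S.card ≤ ((Finset.range k).image fun i => (e i).2).card + 1 :=
            Finset.card_insert_le _ _
        _ ≤ k + 1 := by
            have := Finset.card_image_le (s := Finset.range k) (f := fun i => (e i).2)
            simpa [Finset.card_range] using Nat.add_le_add_right this 1
    have h2 : k + 1 < Fintype.card V := by omega
    omega
  have hout : ∃ w, ¬ InTree v e k w := by
    by_contra hcon
    push_neg at hcon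
    have : S = Finset.univ := Finset.eq_univ_iff_forall.2 fun x => (hmemS x).2 (hcon x)
    rw [this, Finset.card_univ] at hcard
    omega
  obtain ⟨w, hw⟩ := hout
  have hwv : v ≠ w := fun h => hw (h ▸ Or.inl rfl)
  obtain ⟨t0, ht0⟩ := hsource w
  obtain ⟨a0, ha0⟩ := treach_to_arr ht0 hwv
  -- the candidate edge set is nonempty
  obtain ⟨p0, hp0⟩ := crossing hFor ha0 (Or.inl rfl) hw
  -- pick a candidate of minimum label
  set C : Finset (V × V) := Finset.univ.filter (fun p : V × V =>
    G.Adj p.1 p.2 ∧ InTree v e k p.1 ∧ ¬ InTree v e k p.2 ∧ ExtIncr lab v e k p.1 p.2)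
    with hC
  have hp0C : p0 ∈ C := by
    rw [hC, Finset.mem_filter]
    exact ⟨Finset.mem_univ _, hp0.1, hp0.2.1, hp0.2.2.1, hp0.2.2.2.1⟩
  obtain ⟨p, hpC, hpmin⟩ := Finset.exists_min_image C (fun p => lab s(p.1, p.2)) ⟨p0, hp0C⟩
  rw [hC, Finset.mem_filter] at hpC
  obtain ⟨-, hpadj, hpin, hpout, hpext⟩ := hpC
  have hpmin' : ∀ a b : V, G.Adj a b → InTree v e k a → ¬ InTree v e k b →
      ExtIncr lab v e k a b → lab s(p.1, p.2) ≤ lab s(a, b) := by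
    intro a b h1 h2 h3 h4
    exact hpmin (a, b) (by rw [hC, Finset.mem_filter]; exact ⟨Finset.mem_univ _, h1, h2, h3, h4⟩)
  -- the new edge realises a foremost path to its new endpoint
  have hreachp : ReachArr G lab v p.2 (lab s(p.1, p.2)) := by
    rcases hpext with hpv | ⟨j, hj, hje, hle⟩
    · exact ⟨lab s(p.1, p.2), hpv ▸ TReachArr.single hpadj le_rfl⟩
    · obtain ⟨t1, ht1⟩ := (hFor j hj).1
      have hadj' : G.Adj (e j).2 p.2 := by rw [hje]; exact hpadj
      have hle' : lab s((e j).1, (e j).2) ≤ lab s((e j).2, p.2) := by rw [← hje] at hle; exact hle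
      refine ⟨t1, ?_⟩
      rw [← hje]
      exact tarr_append ht1 hadj' hle'
  have hforep : Foremost G lab v p.2 (lab s(p.1, p.2)) := by
    refine ⟨hreachp, ?_⟩
    rintro a' ⟨t', ht'⟩
    obtain ⟨q, hq⟩ := crossing hFor ht' (Or.inl rfl) hpout
    exact (hpmin' q.1 q.2 hq.1 hq.2.1 hq.2.2.1 hq.2.2.2.1).trans hq.2.2.2.2
  -- update the sequence
  refine ⟨Function.update e k p, fun j hj => (Function.update_of_ne (Nat.ne_of_lt hj) _ _).symm, ?_⟩
  set e' := Function.update e k p with he'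
  have hagree : ∀ j < k + 1, ∀ x, InTree v e j x ↔ InTree v e' j x := by
    intro j hj x
    refine intree_congr fun i hi => ?_
    rw [he', Function.update_of_ne (by omega) _ _]
  have hagree2 : ∀ j < k + 1, ∀ a b, ExtIncr lab v e j a b ↔ ExtIncr lab v e' j a b := by
    intro j hj a b
    refine extincr_congr fun i hi => ?_
    rw [he', Function.update_of_ne (by omega) _ _]
  intro i hi
  by_cases hik : i = k
  · subst hik
    have hei : e' i = p := Function.update_self _ _ _
    rw [hei]
    refine ⟨hpadj, (hagree i (by omega) _).1 hpin, fun hc => hpout ((hagree i (by omega) _).2 hc),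
      (hagree2 i (by omega) _ _).1 hpext, ?_, hforep⟩
    intro a b h1 h2 h3 h4
    exact hpmin' a b h1 ((hagree i (by omega) _).2 h2) (fun hc => h3 ((hagree i (by omega) _).1 hc))
      ((hagree2 i (by omega) _ _).2 h4)
  · have hik' : i < k := by omega
    have hei : e' i = e i := Function.update_of_ne (by omega) _ _
    obtain ⟨h1, h2, h3, h4, h5, h6⟩ := hg i hik'
    rw [hei]
    refine ⟨h1, (hagree i (by omega) _).1 h2, fun hc => h3 ((hagree i (by omega) _).2 hc),
      (hagree2 i (by omega) _ _).1 h4, ?_, h6⟩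
    intro a b ha hb hc hd
    exact h5 a b ha ((hagree i (by omega) _).2 hb) (fun hx => hc ((hagree i (by omega) _).1 hx))
      ((hagree2 i (by omega) _ _).2 hd)

lemma good_exists [Fintype V] {v : V} (hsource : TSource G lab v) :
    ∀ k ≤ Fintype.card V - 1, ∃ e, Good G lab v e k := by
  intro k
  induction k with
  | zero => exact fun _ => ⟨fun _ => (v, v), fun i hi => absurd hi (Nat.not_lt_zero i)⟩
  | succ n ih =>
    intro hk
    obtain ⟨e, he⟩ := ih (by omega)
    obtain ⟨e', -, he'⟩ := good_step hsource hk he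
    exact ⟨e', he'⟩

end Aux

/-- Correctness of the greedy foremost-tree algorithm: given a finite
simple temporal graph `(G, lab)` with temporal source `v`, there is a run of the greedy
algorithm (a sequence of `|V| - 1` edges, each with exactly one endpoint in the current
tree, extending it to an increasing temporal tree rooted at `v`, of minimum label among
all such edges) which produces a spanning tree all of whose root-to-vertex paths are
foremost temporal paths in `(G, lab)`. -/
theorem foremost_tree_correct {V : Type*} [Fintype V] (G : SimpleGraph V)
    (lab : Sym2 V → ℝ) (v : V) (hsource : TSource G lab v) :
    ∃ e : ℕ → V × V,
      (∀ i < Fintype.card V - 1,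
        G.Adj (e i).1 (e i).2 ∧ InTree v e i (e i).1 ∧ ¬ InTree v e i (e i).2 ∧
        ExtIncr lab v e i (e i).1 (e i).2 ∧
        (∀ a b : V, G.Adj a b → InTree v e i a → ¬ InTree v e i b →
          ExtIncr lab v e i a b → lab s((e i).1, (e i).2) ≤ lab s(a, b))) ∧
      (∀ u : V, InTree v e (Fintype.card V - 1) u) ∧
      (∀ i < Fintype.card V - 1,
        Foremost G lab v (e i).2 (lab s((e i).1, (e i).2))) := by
  classical
  obtain ⟨e, he⟩ := good_exists hsource (Fintype.card V - 1) le_rfl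
  refine ⟨e, fun i hi => ?_, ?_, fun i hi => (he i hi).2.2.2.2.2⟩
  · obtain ⟨h1, h2, h3, h4, h5, -⟩ := he i hi
    exact ⟨h1, h2, h3, h4, h5⟩
  · -- spanning
    set k := Fintype.card V - 1 with hkdef
    have hn : 1 ≤ Fintype.card V := Fintype.card_pos_iff.2 ⟨v⟩
    set S : Finset V := insert v ((Finset.range k).image fun i => (e i).2) with hS
    have hmemS : ∀ x, x ∈ S ↔ InTree v e k x := by
      intro x
      simp [hS, InTree, Finset.mem_insert, Finset.mem_image, Finset.mem_range]
    have hvnot : v ∉ (Finset.range k).image fun i => (e i).2 := by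
      simp only [Finset.mem_image, Finset.mem_range, not_exists]
      rintro i ⟨hi, hvi⟩
      exact (he i hi).2.2.1 (Or.inl hvi)
    have hinj : Set.InjOn (fun i => (e i).2) (Finset.range k) := by
      intro i hi j hj hij
      simp only [Finset.coe_range, Set.mem_Iio] at hi hj
      rcases lt_trichotomy i j with h | h | h
      · exact absurd (Or.inr ⟨i, h, hij⟩) (he j hj).2.2.1
      · exact h
      · exact absurd (Or.inr ⟨j, h, hij.symm⟩) (he i hi).2.2.1
    have hcard : S.card = Fintype.card V := by
      rw [hS, Finset.card_insert_of_notMem hvnot, Finset.card_image_of_injOn hinj,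
        Finset.card_range]
      omega
    have huniv : S = Finset.univ := Finset.eq_univ_of_card S hcard
    intro u
    exact (hmemS u).1 (huniv ▸ Finset.mem_univ u)
end

section
/- Let X' be the minimum of M independent uniform random variables on [0, a] (with 0 < a ≤ 1) and let 0 < c ≤ a. Then E[min(X', c)] = (a + (c − a)(1 − c/a)^M)/(M + 1) ≥ a(1 − (1 − c)^M)/(M + 1). -/
/-! For `0 ≤ t ≤ a`, independence gives `P(min_i X_i > t) = (1 - t/a)^M`, so by the layer-cake
formula `E[min(X', c)] = ∫₀ᶜ (1 - t/a)^M dt = a (1 - (1 - c/a)^(M+1)) / (M + 1)`. The lower bound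
follows from `0 ≤ 1 - c/a ≤ 1 - c` (as `a ≤ 1`), whence `(1 - c/a)^(M+1) ≤ (1 - c)^M`. -/

open MeasureTheory ProbabilityTheory Set

theorem uniformIcc_Ioi {a : ℝ} (ha : 0 < a) {t : ℝ} (ht : 0 ≤ t) :
    ((ENNReal.ofReal a)⁻¹ • volume.restrict (Icc 0 a)) (Ioi t) = ENNReal.ofReal (1 - t / a) := by
  have hIoc : Ioi t ∩ Icc 0 a = Ioc t a := by
    ext x
    simp only [mem_inter_iff, mem_Ioi, mem_Icc, mem_Ioc]
    exact ⟨fun h => ⟨h.1, h.2.2⟩, fun h => ⟨h.1, ht.trans h.1.le, h.2⟩⟩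
  rw [Measure.smul_apply, Measure.restrict_apply measurableSet_Ioi, hIoc, Real.volume_Ioc,
    smul_eq_mul, ← ENNReal.ofReal_inv_of_pos ha, ← ENNReal.ofReal_mul (by positivity)]
  congr 1
  field_simp

theorem uniformIcc_Iio_zero (a : ℝ) :
    ((ENNReal.ofReal a)⁻¹ • volume.restrict (Icc 0 a)) (Iio 0) = 0 := by
  have : Iio (0 : ℝ) ∩ Icc 0 a = ∅ := by
    ext x
    simp only [mem_inter_iff, mem_Iio, mem_Icc, mem_empty_iff_false, iff_false, not_and]
    exact fun h h' => absurd h' h.not_ge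
  rw [Measure.smul_apply, Measure.restrict_apply measurableSet_Iio, this, measure_empty,
    smul_zero]

theorem Finite.lt_ciInf_iff {ι α : Type*} [Finite ι] [Nonempty ι]
    [ConditionallyCompleteLinearOrder α] {f : ι → α} {t : α} :
    t < ⨅ i, f i ↔ ∀ i, t < f i := by
  refine ⟨fun h i => h.trans_le (Finite.ciInf_le f i), fun h => ?_⟩
  obtain ⟨i, hi⟩ := exists_eq_ciInf_of_finite (f := f)
  exact hi ▸ h i

section UniformRandomVariables

variable {Ω : Type*} [MeasurableSpace Ω] {μ : Measure Ω} {a : ℝ}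

theorem ae_nonneg_of_map_eq_uniformIcc {X : Ω → ℝ} (hX : Measurable X)
    (hunif : μ.map X = (ENNReal.ofReal a)⁻¹ • volume.restrict (Icc 0 a)) : 0 ≤ᵐ[μ] X := by
  have hneg : μ (X ⁻¹' Iio 0) = 0 := by
    rw [← Measure.map_apply hX measurableSet_Iio, hunif, uniformIcc_Iio_zero]
  filter_upwards [measure_eq_zero_iff_ae_notMem.mp hneg] with ω hω
  simpa using hω

theorem ProbabilityTheory.iIndepFun.measure_lt_iInf {ι : Type*} [Fintype ι] [Nonempty ι]
    {X : ι → Ω → ℝ} (hX : iIndepFun X μ) (t : ℝ) :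
    μ {ω | t < ⨅ i, X i ω} = ∏ i, μ (X i ⁻¹' Ioi t) := by
  have : {ω | t < ⨅ i, X i ω} = ⋂ i, X i ⁻¹' Ioi t := by
    ext ω
    simp only [mem_ofPred_eq, mem_iInter, mem_preimage, mem_Ioi, Finite.lt_ciInf_iff]
  rw [this, hX.meas_iInter fun i => ⟨Ioi t, measurableSet_Ioi, rfl⟩]

theorem measureReal_lt_iInf_of_uniformIcc {ι : Type*} [Fintype ι] [Nonempty ι]
    {X : ι → Ω → ℝ} (hmeas : ∀ i, Measurable (X i)) (hindep : iIndepFun X μ)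
    (hunif : ∀ i, μ.map (X i) = (ENNReal.ofReal a)⁻¹ • volume.restrict (Icc 0 a))
    (ha : 0 < a) {t : ℝ} (ht0 : 0 ≤ t) (hta : t ≤ a) :
    μ.real {ω | t < ⨅ i, X i ω} = (1 - t / a) ^ Fintype.card ι := by
  have hXi : ∀ i, μ (X i ⁻¹' Ioi t) = ENNReal.ofReal (1 - t / a) := fun i => by
    rw [← Measure.map_apply (hmeas i) measurableSet_Ioi, hunif i, uniformIcc_Ioi ha ht0]
  have hnn : 0 ≤ 1 - t / a := by rw [sub_nonneg]; exact div_le_one_of_le₀ hta ha.le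
  rw [measureReal_def, hindep.measure_lt_iInf, Finset.prod_congr rfl fun i _ => hXi i,
    Finset.prod_const, Finset.card_univ, ENNReal.toReal_pow, ENNReal.toReal_ofReal hnn]

end UniformRandomVariables

theorem integral_min_eq_intervalIntegral_measureReal_lt {Ω : Type*} [MeasurableSpace Ω]
    {μ : Measure Ω} [IsFiniteMeasure μ] {Y : Ω → ℝ} (hY : AEMeasurable Y μ) (hY0 : 0 ≤ᵐ[μ] Y)
    {c : ℝ} (hc : 0 ≤ c) :
    ∫ ω, min (Y ω) c ∂μ = ∫ t in 0..c, μ.real {ω | t < Y ω} := by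
  have hnn : 0 ≤ᵐ[μ] fun ω => min (Y ω) c := by
    filter_upwards [hY0] with ω hω
    exact le_min hω hc
  have hint : Integrable (fun ω => min (Y ω) c) μ := by
    refine (integrable_const c).mono' (hY.min aemeasurable_const).aestronglyMeasurable ?_
    filter_upwards [hnn] with ω hω
    rw [Real.norm_eq_abs, abs_of_nonneg hω]
    exact min_le_right _ _
  have htail : ∀ t, μ.real {ω | t < min (Y ω) c} =
      (Iio c).indicator (fun t => μ.real {ω | t < Y ω}) t := by
    intro t
    by_cases htc : t < c <;> simp [htc]
  rw [hint.integral_eq_integral_meas_lt hnn, intervalIntegral.integral_of_le hc,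
    integral_Ioc_eq_integral_Ioo]
  simp only [htail]
  rw [setIntegral_indicator measurableSet_Iio, Ioi_inter_Iio]

theorem add_sub_mul_one_sub_div_pow {a : ℝ} (ha : a ≠ 0) (c : ℝ) (M : ℕ) :
    a + (c - a) * (1 - c / a) ^ M = a * (1 - (1 - c / a) ^ (M + 1)) := by
  have hc : c - a = -(a * (1 - c / a)) := by field_simp; ring
  rw [hc]
  ring

theorem intervalIntegral_one_sub_div_pow {a : ℝ} (ha : a ≠ 0) (c : ℝ) (M : ℕ) :
    ∫ t in 0..c, (1 - t / a) ^ M = (a + (c - a) * (1 - c / a) ^ M) / (M + 1) := by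
  rw [intervalIntegral.integral_comp_div (fun x => (1 - x) ^ M) ha,
    intervalIntegral.integral_comp_sub_left (fun x => x ^ M), integral_pow,
    add_sub_mul_one_sub_div_pow ha]
  simp only [zero_div, sub_zero, one_pow, smul_eq_mul]
  ring

theorem mul_one_sub_pow_le {a c : ℝ} (M : ℕ) (ha0 : 0 < a) (ha1 : a ≤ 1) (hc0 : 0 ≤ c)
    (hca : c ≤ a) :
    a * (1 - (1 - c) ^ M) ≤ a + (c - a) * (1 - c / a) ^ M := by
  have h0 : 0 ≤ 1 - c / a := by rw [sub_nonneg]; exact div_le_one_of_le₀ hca ha0.le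
  have h1 : 1 - c / a ≤ 1 - c := by
    gcongr
    exact le_div_self hc0 ha0 ha1
  rw [add_sub_mul_one_sub_div_pow ha0.ne']
  gcongr a * (1 - ?_)
  calc (1 - c / a) ^ (M + 1) ≤ (1 - c / a) ^ M := pow_le_pow_of_le_one h0 (by linarith) M.le_succ
    _ ≤ (1 - c) ^ M := by gcongr

/-- Let `X'` be the minimum of `M ≥ 1` independent uniform random
variables on `[0, a]` (with `0 < a ≤ 1`) and let `0 < c ≤ a`. Then
`E[min(X', c)] = (a + (c - a)(1 - c/a)^M)/(M + 1) ≥ a(1 - (1 - c)^M)/(M + 1)`. -/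
theorem expectation_truncated_min_uniform {Ω : Type*} [MeasurableSpace Ω]
    (μ : Measure Ω) [IsProbabilityMeasure μ]
    (M : ℕ) (hM : 1 ≤ M) (a c : ℝ) (ha0 : 0 < a) (ha1 : a ≤ 1) (hc0 : 0 < c) (hca : c ≤ a)
    (X : Fin M → Ω → ℝ) (hmeas : ∀ i, Measurable (X i))
    (hindep : iIndepFun X μ)
    (hunif : ∀ i, Measure.map (X i) μ =
      (ENNReal.ofReal a)⁻¹ • volume.restrict (Set.Icc 0 a)) :
    ∫ ω, min (⨅ i, X i ω) c ∂μ = (a + (c - a) * (1 - c / a) ^ M) / (M + 1) ∧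
      a * (1 - (1 - c) ^ M) / (M + 1) ≤ ∫ ω, min (⨅ i, X i ω) c ∂μ := by
  have : Nonempty (Fin M) := Fin.pos_iff_nonempty.mp hM
  have hmin0 : 0 ≤ᵐ[μ] fun ω => ⨅ i, X i ω := by
    filter_upwards [ae_all_iff.2 fun i => ae_nonneg_of_map_eq_uniformIcc (hmeas i) (hunif i)]
      with ω hω using le_ciInf hω
  have htail : EqOn (fun t => μ.real {ω | t < ⨅ i, X i ω}) (fun t => (1 - t / a) ^ M)
      (uIcc 0 c) := fun t ht => by
    rw [uIcc_of_le hc0.le] at ht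
    simpa using measureReal_lt_iInf_of_uniformIcc hmeas hindep hunif ha0 ht.1 (ht.2.trans hca)
  have hE : ∫ ω, min (⨅ i, X i ω) c ∂μ = (a + (c - a) * (1 - c / a) ^ M) / (M + 1) := by
    rw [integral_min_eq_intervalIntegral_measureReal_lt (Measurable.iInf hmeas).aemeasurable
      hmin0 hc0.le, intervalIntegral.integral_congr htail, intervalIntegral_one_sub_div_pow ha0.ne']
  refine ⟨hE, hE ▸ ?_⟩
  gcongr
  exact mul_one_sub_pow_le M ha0 ha1 hc0.le hca
end

section
/- Fix α ≥ 3 and let n ≥ 4 with p = α·√(log n / n) ≤ 1. In the Erdős–Rényi random graph G_{n,p} with independent uniform [0,1] labels on edges, conditioned on a fixed vertex x and any other vertex z, the probability that there is no temporal path of length exactly two from x to z is at most n^{−α²/4}. Consequently, x is a temporal source with probability at least 1 − n^{−α²/4 + 1}. -/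
open MeasureTheory

/-- The random simple temporal graph model: each of the `C(n,2)` potential edges of the
complete graph on `Fin n` carries an independent uniform label in `[0,1]`; the graph
`F_{n,p}` is recovered by keeping the edges with label at most `p` (the paper's coupling
of `F_{n,p}` as the restriction of `F_{n,1}` to labels in `[0,p]`; temporal reachability
only depends on presence of edges and the relative order of their labels). -/
noncomputable def rstgMeasure (n : ℕ) : Measure (Sym2 (Fin n) → ℝ) :=
  Measure.pi fun _ => volume.restrict (Set.Icc (0 : ℝ) 1)

/-- The graph of edges present by time `p`: those whose label is at most `p`. -/
def presentGraph {n : ℕ} (ω : Sym2 (Fin n) → ℝ) (p : ℝ) : SimpleGraph (Fin n) :=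
  SimpleGraph.fromEdgeSet {e | ω e ≤ p}

open ProbabilityTheory Function Set Real

theorem measurePreserving_pi_comp_of_injective {ι κ α : Type*} [Fintype ι] [Fintype κ]
    [MeasurableSpace α] (ν : Measure α) [IsProbabilityMeasure ν] {e : κ → ι}
    (he : Injective e) :
    MeasurePreserving (fun ω : ι → α => ω ∘ e) (Measure.pi fun _ => ν)
      (Measure.pi fun _ => ν) where
  measurable := by fun_prop
  map_eq := by
    have hind : iIndepFun (fun k (ω : ι → α) => ω (e k)) (Measure.pi fun _ => ν) :=
      (iIndepFun_pi (X := fun _ (a : α) => a) fun _ => aemeasurable_id).precomp he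
    rw [show (fun ω : ι → α => ω ∘ e) = fun ω k => ω (e k) from rfl,
      hind.map_fun_eq_pi_map fun k => (measurable_pi_apply (e k)).aemeasurable]
    simp_rw [(measurePreserving_eval (fun _ => ν) _).map_eq]

theorem measurePreserving_pi_pairs {ι κ α : Type*} [Fintype ι] [Fintype κ]
    [MeasurableSpace α] (ν : Measure α) [IsProbabilityMeasure ν] {e₁ e₂ : κ → ι}
    (he : Injective (Sum.elim e₁ e₂)) :
    MeasurePreserving (fun (ω : ι → α) k => (ω (e₁ k), ω (e₂ k))) (Measure.pi fun _ => ν)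
      (Measure.pi fun _ => ν.prod ν) :=
  ((measurePreserving_arrowProdEquivProdArrow α α κ (fun _ => ν) (fun _ => ν)).symm.comp
    (measurePreserving_sumPiEquivProdPi fun _ : κ ⊕ κ => ν)).comp
    (measurePreserving_pi_comp_of_injective ν he)

theorem pi_setOf_forall_pair_mem {ι κ α : Type*} [Fintype ι] [Fintype κ]
    [MeasurableSpace α] (ν : Measure α) [IsProbabilityMeasure ν] {e₁ e₂ : κ → ι}
    (he : Injective (Sum.elim e₁ e₂)) {D : Set (α × α)} (hD : MeasurableSet D) :
    Measure.pi (fun _ => ν) {ω : ι → α | ∀ k, (ω (e₁ k), ω (e₂ k)) ∈ D}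
      = ν.prod ν D ^ Fintype.card κ := by
  have h := (measurePreserving_pi_pairs ν he).measure_preimage
    (MeasurableSet.univ_pi fun _ => hD).nullMeasurableSet
  simp only [Measure.pi_pi, Finset.prod_const, Finset.card_univ] at h
  rw [← h]
  congr 1
  ext ω
  simp

theorem one_sub_le_measure_of_compl_subset_biUnion {Ω ι : Type*} [MeasurableSpace Ω]
    (μ : Measure Ω) [IsProbabilityMeasure μ] {s : Set Ω} {t : ι → Set Ω} {I : Finset ι}
    (hst : sᶜ ⊆ ⋃ i ∈ I, t i) {ε : ENNReal} (ht : ∀ i ∈ I, μ (t i) ≤ ε) :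
    1 - I.card * ε ≤ μ s := by
  have hcompl : μ sᶜ ≤ I.card * ε :=
    calc μ sᶜ ≤ ∑ i ∈ I, μ (t i) := (measure_mono hst).trans (measure_biUnion_finset_le _ _)
      _ ≤ I.card * ε := by simpa using Finset.sum_le_sum ht
  have hcover : 1 ≤ μ s + μ sᶜ := by
    simpa using measure_union_le (μ := μ) s sᶜ
  rw [tsub_le_iff_right]
  exact hcover.trans (add_le_add_right hcompl _)

instance : IsProbabilityMeasure (volume.restrict (Icc (0 : ℝ) 1)) := ⟨by simp⟩

theorem setLIntegral_Icc_ofReal_sub {p b : ℝ} (hp0 : 0 ≤ p) (hpb : p ≤ b) :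
    ∫⁻ a in Icc 0 b, ENNReal.ofReal (p - a) = ENNReal.ofReal (p ^ 2 / 2) := by
  have hvanish : ∫⁻ a in Ioc p b, ENNReal.ofReal (p - a) = 0 :=
    setLIntegral_eq_zero measurableSet_Ioc fun a ha =>
      ENNReal.ofReal_of_nonpos (by linarith [ha.1])
  rw [← Icc_union_Ioc_eq_Icc hp0 hpb, lintegral_union measurableSet_Ioc
    (disjoint_left.2 fun a h1 h2 => absurd h1.2 (not_le.2 h2.1)), hvanish, add_zero,
    ← ofReal_integral_eq_lintegral_ofReal]
  · rw [integral_Icc_eq_integral_Ioc, ← intervalIntegral.integral_of_le hp0,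
      intervalIntegral.integral_sub intervalIntegrable_const
        intervalIntegral.intervalIntegrable_id,
      intervalIntegral.integral_const, integral_id, smul_eq_mul]
    ring_nf
  · exact (continuous_const.sub continuous_id).integrableOn_Icc
  · filter_upwards [ae_restrict_mem measurableSet_Icc] with a ha
    exact sub_nonneg.2 ha.2

theorem restrict_Icc_prod_setOf_le_le {p : ℝ} (hp0 : 0 ≤ p) (hp1 : p ≤ 1) :
    (volume.restrict (Icc (0 : ℝ) 1)).prod (volume.restrict (Icc (0 : ℝ) 1))
      {q : ℝ × ℝ | q.1 ≤ q.2 ∧ q.2 ≤ p} = ENNReal.ofReal (p ^ 2 / 2) := by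
  have hmeas : MeasurableSet {q : ℝ × ℝ | q.1 ≤ q.2 ∧ q.2 ≤ p} :=
    (measurableSet_le measurable_fst measurable_snd).inter
      (measurableSet_le measurable_snd measurable_const)
  have hslice : ∀ a ∈ Icc (0 : ℝ) 1,
      volume.restrict (Icc (0 : ℝ) 1) (Prod.mk a ⁻¹' {q : ℝ × ℝ | q.1 ≤ q.2 ∧ q.2 ≤ p})
        = ENNReal.ofReal (p - a) := by
    intro a ha
    have : Prod.mk a ⁻¹' {q : ℝ × ℝ | q.1 ≤ q.2 ∧ q.2 ≤ p} = Icc a p := rfl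
    rw [this, Measure.restrict_apply measurableSet_Icc, Icc_inter_Icc, max_eq_left ha.1,
      min_eq_left hp1, Real.volume_Icc]
  rw [Measure.prod_apply hmeas, setLIntegral_congr_fun measurableSet_Icc hslice,
    setLIntegral_Icc_ofReal_sub hp0 hp1]

theorem one_sub_sq_half_pow_le_rpow {n : ℕ} (hn : 4 ≤ n) {α p : ℝ} (hα : 0 ≤ α)
    (hp : p = α * √(log n / n)) (hp1 : p ≤ 1) :
    (1 - p ^ 2 / 2) ^ (n - 2) ≤ (n : ℝ) ^ (-(α ^ 2) / 4) := by
  have hn4 : (4 : ℝ) ≤ n := by exact_mod_cast hn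
  have hu : 0 ≤ log n / n := div_nonneg (log_nonneg (by linarith)) (by linarith)
  have hp0 : 0 ≤ p := hp ▸ mul_nonneg hα (sqrt_nonneg _)
  have hp2 : p ^ 2 = α ^ 2 * (log n / n) := by rw [hp, mul_pow, sq_sqrt hu]
  -- `(n - 2) / (2 n) ≥ 1 / 4` exactly when `n ≥ 4`
  have hexponent : -((n - 2 : ℕ) * (p ^ 2 / 2)) ≤ log n * (-(α ^ 2) / 4) := by
    have hlog : log n = log n / n * n := by field_simp
    rw [Nat.cast_sub (by omega), hp2]
    set u := log n / n
    rw [hlog]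
    push_cast
    nlinarith [mul_nonneg (mul_nonneg (sq_nonneg α) hu) (sub_nonneg.2 hn4)]
  calc (1 - p ^ 2 / 2) ^ (n - 2)
      ≤ exp (-(p ^ 2 / 2)) ^ (n - 2) :=
        pow_le_pow_left₀ (by nlinarith) (one_sub_le_exp_neg _) _
    _ = exp (-((n - 2 : ℕ) * (p ^ 2 / 2))) := by rw [← exp_nat_mul, mul_neg]
    _ ≤ exp (log n * (-(α ^ 2) / 4)) := exp_le_exp.2 hexponent
    _ = (n : ℝ) ^ (-(α ^ 2) / 4) := (rpow_def_of_pos (by linarith) _).symm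

def TwoHop {V : Type*} (ω : Sym2 V → ℝ) (p : ℝ) (x z : V) : Prop :=
  ∃ y, y ≠ x ∧ y ≠ z ∧ ω s(x, y) ≤ ω s(y, z) ∧ ω s(y, z) ≤ p

theorem TwoHop.tReach {n : ℕ} {ω : Sym2 (Fin n) → ℝ} {p : ℝ} {x z : Fin n}
    (h : TwoHop ω p x z) : TReach (presentGraph ω p) ω x z := by
  obtain ⟨y, hyx, hyz, hle, hlep⟩ := h
  have hxy : (presentGraph ω p).Adj x y :=
    (SimpleGraph.fromEdgeSet_adj _).2 ⟨hle.trans hlep, hyx.symm⟩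
  have hyz' : (presentGraph ω p).Adj y z := (SimpleGraph.fromEdgeSet_adj _).2 ⟨hlep, hyz⟩
  exact ⟨_, .step hxy le_rfl (.step hyz' hle (.refl _ z))⟩

theorem setOf_tSource_compl_subset {n : ℕ} (p : ℝ) (x : Fin n) :
    {ω : Sym2 (Fin n) → ℝ | TSource (presentGraph ω p) ω x}ᶜ
      ⊆ ⋃ z ∈ Finset.univ.erase x, {ω | ¬ TwoHop ω p x z} := by
  intro ω hω
  simp only [mem_compl_iff, mem_ofPred_eq, TSource, not_forall] at hω
  obtain ⟨z, hz⟩ := hω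
  have hzx : z ≠ x := by
    rintro rfl
    exact hz ⟨0, .refl 0 z⟩
  exact mem_biUnion (Finset.mem_erase.2 ⟨hzx, Finset.mem_univ z⟩) fun h => hz h.tReach

instance (n : ℕ) : IsProbabilityMeasure (rstgMeasure n) := by
  unfold rstgMeasure
  infer_instance

theorem rstgMeasure_not_twoHop_le {n : ℕ} (hn : 4 ≤ n) {α p : ℝ} (hα : 0 ≤ α)
    (hp : p = α * √(log n / n)) (hp1 : p ≤ 1) {x z : Fin n} (hxz : x ≠ z) :
    rstgMeasure n {ω | ¬ TwoHop ω p x z} ≤ ENNReal.ofReal ((n : ℝ) ^ (-(α ^ 2) / 4)) := by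
  set C : Set (ℝ × ℝ) := {q | q.1 ≤ q.2 ∧ q.2 ≤ p}
  have hC : MeasurableSet C :=
    (measurableSet_le measurable_fst measurable_snd).inter
      (measurableSet_le measurable_snd measurable_const)
  have hp0 : 0 ≤ p := hp ▸ mul_nonneg hα (sqrt_nonneg _)
  have hmid : ∀ y, y ∈ ({x, z} : Finset (Fin n))ᶜ ↔ y ≠ x ∧ y ≠ z := by simp
  let κ := {y // y ∈ ({x, z} : Finset (Fin n))ᶜ}
  have hcard : Fintype.card κ = n - 2 := by
    rw [Fintype.card_coe, Finset.card_compl, Finset.card_pair hxz, Fintype.card_fin]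
  have hinj : Injective (Sum.elim (fun y : κ => s(x, y.1)) fun y : κ => s(y.1, z)) := by
    refine Injective.sumElim (fun a b h => Subtype.ext (Sym2.congr_right.1 h))
      (fun a b h => Subtype.ext (Sym2.congr_left.1 h)) fun a b h => ?_
    rcases Sym2.eq_iff.1 h with ⟨hxb, -⟩ | ⟨hxz', -⟩
    · exact ((hmid b).1 b.2).1 hxb.symm
    · exact hxz hxz'
  have hevent : {ω | ¬ TwoHop ω p x z}
      = {ω : Sym2 (Fin n) → ℝ | ∀ y : κ, (ω s(x, y.1), ω s(y.1, z)) ∈ Cᶜ} := by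
    ext ω
    simp only [TwoHop, mem_ofPred_eq, mem_compl_iff, C]
    constructor
    · rintro h ⟨y, hy⟩ ⟨hle, hlep⟩
      exact h ⟨y, ((hmid y).1 hy).1, ((hmid y).1 hy).2, hle, hlep⟩
    · rintro h ⟨y, hyx, hyz, hle, hlep⟩
      exact h ⟨y, (hmid y).2 ⟨hyx, hyz⟩⟩ ⟨hle, hlep⟩
  rw [hevent, rstgMeasure, pi_setOf_forall_pair_mem _ hinj hC.compl, prob_compl_eq_one_sub hC,
    restrict_Icc_prod_setOf_le_le hp0 hp1, hcard, ← ENNReal.ofReal_one,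
    ← ENNReal.ofReal_sub _ (by positivity), ← ENNReal.ofReal_pow (by nlinarith)]
  exact ENNReal.ofReal_le_ofReal (one_sub_sq_half_pow_le_rpow hn hα hp hp1)

/-- Fix `α ≥ 3`, `n ≥ 4` and `p = α·√(log n / n) ≤ 1`. In the random
simple temporal graph `F_{n,p}`, for fixed distinct vertices `x, z`: the probability
that there is no temporal path of length exactly two from `x` to `z` is at most
`n^{-α²/4}`; consequently `x` is a temporal source with probability at least
`1 - n^{-α²/4 + 1}`. -/
theorem rstg_two_hop (n : ℕ) (hn : 4 ≤ n) (α p : ℝ) (hα : 3 ≤ α)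
    (hp : p = α * Real.sqrt (Real.log n / n)) (hp1 : p ≤ 1)
    (x z : Fin n) (hxz : x ≠ z) :
    rstgMeasure n {ω | ¬ ∃ y : Fin n, y ≠ x ∧ y ≠ z ∧
        ω s(x, y) ≤ ω s(y, z) ∧ ω s(y, z) ≤ p}
      ≤ ENNReal.ofReal ((n : ℝ) ^ (-(α ^ 2) / 4)) ∧
    ENNReal.ofReal (1 - (n : ℝ) ^ (-(α ^ 2) / 4 + 1)) ≤
      rstgMeasure n {ω | TSource (presentGraph ω p) ω x} := by
  have hα0 : 0 ≤ α := by linarith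
  refine ⟨rstgMeasure_not_twoHop_le hn hα0 hp hp1 hxz, ?_⟩
  have hn0 : (0 : ℝ) < n := by exact_mod_cast (show 0 < n by omega)
  calc ENNReal.ofReal (1 - (n : ℝ) ^ (-(α ^ 2) / 4 + 1))
      ≤ 1 - (Finset.univ.erase x).card * ENNReal.ofReal ((n : ℝ) ^ (-(α ^ 2) / 4)) := by
        rw [ENNReal.ofReal_sub _ (by positivity), ENNReal.ofReal_one, rpow_add_one hn0.ne',
          ENNReal.ofReal_mul (by positivity), ENNReal.ofReal_natCast, mul_comm]
        gcongr
        simp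
    _ ≤ rstgMeasure n {ω | TSource (presentGraph ω p) ω x} :=
        one_sub_le_measure_of_compl_subset_biUnion _ (setOf_tSource_compl_subset p x)
          fun z hz => rstgMeasure_not_twoHop_le hn hα0 hp hp1 (Finset.ne_of_mem_erase hz).symm
end

section
/- For a random simple temporal graph on n vertices with edge probability p = log(n)/√n, the graph is temporally connected with probability at least 1 − n^{−(log n)/4 + 2}, for all n ≥ 4. -/
open MeasureTheory

/-! For distinct `x` and `y`, if `x` does not reach `y` through edges with labels `≤ p`, then the
edge `xy` has label `> p`, and for each of the `n - 2` other vertices `z` the walk `x z y` does not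
have labels `ω(xz) ≤ p/2 ≤ ω(zy) ≤ p`. These `n - 1` events depend on disjoint sets of edges, so
they are independent, and the failure probability is at most
`(1 - p) (1 - p²/4)^(n-2) ≤ exp (-p - (n - 2) p²/4)`. Since `n p² = log² n` and `p ≤ 1`, this is
at most `n^(-(log n)/4)`, and a union bound over the `n²` ordered pairs finishes the proof. -/

open Set Function
open scoped ENNReal

section BlockIndependence

variable {ι κ β α : Type*} [Fintype ι] [Fintype κ] [Fintype β] [MeasurableSpace α]
  (ν : Measure α) [IsProbabilityMeasure ν]

theorem measurePreserving_comp_right_of_injective {f : κ → ι} (hf : Injective f) :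
    MeasurePreserving (· ∘ f) (Measure.pi fun _ : ι => ν) (Measure.pi fun _ : κ => ν) := by
  refine ⟨by fun_prop, (Measure.pi_eq fun s hs => ?_).symm⟩
  have hpreimage : (· ∘ f) ⁻¹' univ.pi s = univ.pi (extend f s fun _ => univ) := by
    ext ω
    simp only [mem_preimage, mem_univ_pi, comp_apply]
    refine ⟨fun h i => ?_, fun h k => by simpa [hf.extend_apply] using h (f k)⟩
    by_cases hi : ∃ k, f k = i
    · obtain ⟨k, rfl⟩ := hi
      simpa [hf.extend_apply] using h k
    · simp [extend_apply' _ _ _ hi]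
  have hfactor : ∀ i, ν (extend f s (fun _ => univ) i) = extend f (fun k => ν (s k)) 1 i := by
    intro i
    by_cases hi : ∃ k, f k = i
    · obtain ⟨k, rfl⟩ := hi
      simp [hf.extend_apply]
    · simp [extend_apply' _ _ _ hi]
  rw [Measure.map_apply (by fun_prop) (.univ_pi hs), hpreimage, Measure.pi_pi]
  simp only [hfactor, ← tprod_fintype (L := .unconditional _)]
  exact tprod_extend_one hf _

theorem measurePreserving_curry :
    MeasurePreserving (curry : (κ × β → α) → κ → β → α)
      (Measure.pi fun _ => ν) (Measure.pi fun _ => Measure.pi fun _ => ν) := by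
  refine ⟨measurable_curry, ?_⟩
  have h := Measure.infinitePi_map_curry fun (_ : κ) (_ : β) => ν
  simp only [Measure.infinitePi_eq_pi] at h
  exact h

theorem pi_setOf_forall_block_mem {f : κ × β → ι} (hf : Injective f) {S : κ → Set (β → α)}
    (hS : ∀ k, MeasurableSet (S k)) :
    Measure.pi (fun _ : ι => ν) {ω | ∀ k, (fun b => ω (f (k, b))) ∈ S k} =
      ∏ k, Measure.pi (fun _ : β => ν) (S k) := by
  have h := (measurePreserving_curry ν).comp (measurePreserving_comp_right_of_injective ν hf)
  rw [← Measure.pi_pi, ← h.measure_preimage (MeasurableSet.univ_pi hS).nullMeasurableSet]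
  congr 1
  ext ω
  simp only [mem_ofPred_eq, mem_preimage, mem_univ_pi]
  rfl

end BlockIndependence

instance inst_s12 : IsProbabilityMeasure (volume.restrict (Icc (0 : ℝ) 1)) :=
  ⟨by simp [Real.volume_Icc]⟩

theorem pi_setOf_lt_apply_le {β : Type*} [Fintype β] (b : β) (a : ℝ) :
    Measure.pi (fun _ : β => volume.restrict (Icc (0 : ℝ) 1)) {h | a < h b} ≤
      ENNReal.ofReal (1 - a) := by
  refine ((measurePreserving_eval _ b).measure_preimage
    measurableSet_Ioi.nullMeasurableSet).trans_le ?_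
  rw [Measure.restrict_apply measurableSet_Ioi, ← Real.volume_Icc]
  exact measure_mono fun t ⟨hat, _, ht1⟩ => ⟨le_of_lt hat, ht1⟩

theorem restrict_Icc_zero_one_Icc {a b : ℝ} (ha : 0 ≤ a) (hb : b ≤ 1) :
    volume.restrict (Icc (0 : ℝ) 1) (Icc a b) = ENNReal.ofReal (b - a) := by
  rw [Measure.restrict_apply measurableSet_Icc, inter_eq_left.2 (Icc_subset_Icc ha hb),
    Real.volume_Icc]

theorem ProbabilityTheory.ofReal_one_sub_le_of_measure_compl_le {Ω : Type*} [MeasurableSpace Ω]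
    {μ : Measure Ω} [IsProbabilityMeasure μ] {s : Set Ω} {c : ℝ} (hc : 0 ≤ c)
    (h : μ sᶜ ≤ ENNReal.ofReal c) : ENNReal.ofReal (1 - c) ≤ μ s := by
  have h1 : 1 ≤ μ s + ENNReal.ofReal c :=
    calc 1 = μ (s ∪ sᶜ) := by rw [union_compl_self, measure_univ]
      _ ≤ μ s + μ sᶜ := measure_union_le _ _
      _ ≤ μ s + ENNReal.ofReal c := by gcongr
  rw [ENNReal.ofReal_sub _ hc, ENNReal.ofReal_one]
  exact tsub_le_iff_right.2 h1

theorem Real.log_le_sqrt {x : ℝ} (hx : 0 ≤ x) : Real.log x ≤ √x := by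
  rcases hx.eq_or_lt with rfl | hx
  · simp
  have hlog : Real.log x = 4 * Real.log √√x := by
    rw [Real.log_sqrt (Real.sqrt_nonneg x), Real.log_sqrt hx.le]
    ring
  have hsq : √x = √√x ^ 2 := (Real.sq_sqrt (Real.sqrt_nonneg x)).symm
  have hu : 0 < √√x := by positivity
  generalize √√x = u at hlog hsq hu
  rw [hlog, hsq]
  nlinarith [Real.log_le_sub_one_of_pos hu, sq_nonneg (u - 2)]

theorem Real.log_div_sqrt_mem_Icc {x : ℝ} (hx : 1 ≤ x) : Real.log x / √x ∈ Icc 0 1 := by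
  have hsx : 0 < √x := Real.sqrt_pos.2 (by linarith)
  exact ⟨div_nonneg (Real.log_nonneg hx) hsx.le,
    (div_le_one hsx).2 (Real.log_le_sqrt (by linarith))⟩

namespace TReach

variable {V : Type*} {G : SimpleGraph V} {lab : Sym2 V → ℝ} {u v w : V}

theorem of_adj (h : G.Adj u v) : TReach G lab u v :=
  ⟨_, .step h le_rfl (.refl _ _)⟩

theorem of_adj_adj (huv : G.Adj u v) (hvw : G.Adj v w) (hlab : lab s(u, v) ≤ lab s(v, w)) :
    TReach G lab u w :=
  ⟨_, .step huv le_rfl (.step hvw hlab (.refl _ _))⟩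

end TReach

section TwoHop

variable {n : ℕ} {x y : Fin n} {p : ℝ}

theorem presentGraph_adj {ω : Sym2 (Fin n) → ℝ} {u v : Fin n} :
    (presentGraph ω p).Adj u v ↔ ω s(u, v) ≤ p ∧ u ≠ v := by
  simp [presentGraph]

/-- For `z = y` the walk `x z y` is the single edge `xy`; its second edge `s(y, y)` is a loop,
whose label is never looked at. -/
def twoHopEdge (x y : Fin n) (zb : {z // z ≠ x} × Bool) : Sym2 (Fin n) :=
  bif zb.2 then s(zb.1.1, y) else s(x, zb.1.1)

theorem twoHopEdge_injective (hxy : x ≠ y) : Injective (twoHopEdge x y) := by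
  rintro ⟨⟨z, hz⟩, _ | _⟩ ⟨⟨w, hw⟩, _ | _⟩ h <;>
    simp only [twoHopEdge, cond_false, cond_true, Sym2.eq_iff] at h <;> aesop

/-- A product event forcing `ω(xz) ≤ ω(zy) ≤ p` on the walk `x z y`. -/
def twoHopLabels (p : ℝ) : Set (Bool → ℝ) :=
  univ.pi fun b => bif b then Icc (p / 2) p else Iic (p / 2)

def twoHopFailure (p : ℝ) (y : Fin n) (z : {z // z ≠ x}) : Set (Bool → ℝ) :=
  if z.1 = y then {h | p < h false} else (twoHopLabels p)ᶜ

theorem measurableSet_twoHopLabels : MeasurableSet (twoHopLabels p) :=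
  MeasurableSet.univ_pi fun b => by cases b <;> measurability

theorem measurableSet_twoHopFailure (z : {z // z ≠ x}) : MeasurableSet (twoHopFailure p y z) := by
  unfold twoHopFailure
  split_ifs
  · exact measurableSet_lt measurable_const (measurable_pi_apply _)
  · exact measurableSet_twoHopLabels.compl

theorem setOf_not_tReach_subset (hxy : x ≠ y) :
    {ω | ¬ TReach (presentGraph ω p) ω x y} ⊆
      {ω | ∀ z, (fun b => ω (twoHopEdge x y (z, b))) ∈ twoHopFailure p y z} := by
  intro ω hω z
  by_cases hz : z.1 = y
  · have hdirect : p < ω s(x, y) :=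
      lt_of_not_ge fun hle => hω (TReach.of_adj (presentGraph_adj.2 ⟨hle, hxy⟩))
    simpa [twoHopFailure, hz, twoHopEdge] using hdirect
  · simp only [twoHopFailure, if_neg hz]
    intro hlabels
    simp only [twoHopLabels, mem_univ_pi, Bool.forall_bool, twoHopEdge, cond_false, cond_true,
      mem_Iic, mem_Icc] at hlabels
    obtain ⟨hxz, hzy₁, hzy₂⟩ := hlabels
    exact hω (TReach.of_adj_adj (presentGraph_adj.2 ⟨by linarith, z.2.symm⟩)
      (presentGraph_adj.2 ⟨hzy₂, hz⟩) (hxz.trans hzy₁))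

theorem pi_compl_twoHopLabels_le (hp0 : 0 ≤ p) (hp1 : p ≤ 1) :
    Measure.pi (fun _ : Bool => volume.restrict (Icc (0 : ℝ) 1)) (twoHopLabels p)ᶜ ≤
      ENNReal.ofReal (1 - (p / 2) ^ 2) := by
  have hfirst : ENNReal.ofReal (p / 2) ≤ volume.restrict (Icc (0 : ℝ) 1) (Iic (p / 2)) :=
    calc ENNReal.ofReal (p / 2) = volume.restrict (Icc (0 : ℝ) 1) (Icc 0 (p / 2)) := by
          rw [restrict_Icc_zero_one_Icc le_rfl (by linarith), sub_zero]
      _ ≤ volume.restrict (Icc (0 : ℝ) 1) (Iic (p / 2)) := measure_mono Icc_subset_Iic_self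
  have hlabels : ENNReal.ofReal ((p / 2) ^ 2) ≤
      Measure.pi (fun _ : Bool => volume.restrict (Icc (0 : ℝ) 1)) (twoHopLabels p) := by
    rw [twoHopLabels, Measure.pi_pi, Fintype.prod_bool, cond_true, cond_false,
      restrict_Icc_zero_one_Icc (by linarith) hp1, sub_half, sq, ENNReal.ofReal_mul (by linarith)]
    gcongr
  rw [prob_compl_eq_one_sub measurableSet_twoHopLabels, ENNReal.ofReal_sub _ (sq_nonneg _),
    ENNReal.ofReal_one]
  exact tsub_le_tsub_left hlabels 1

end TwoHop

instance inst_s12_2 (n : ℕ) : IsProbabilityMeasure (rstgMeasure n) := by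
  unfold rstgMeasure
  infer_instance

theorem rstgMeasure_not_tReach_le {n : ℕ} {p : ℝ} (hp0 : 0 ≤ p) (hp1 : p ≤ 1) (x y : Fin n) :
    rstgMeasure n {ω | ¬ TReach (presentGraph ω p) ω x y} ≤
      ENNReal.ofReal ((1 - p) * (1 - (p / 2) ^ 2) ^ (n - 2)) := by
  rcases eq_or_ne x y with rfl | hxy
  · simp [show ∀ ω, TReach (presentGraph ω p) ω x x from fun _ => ⟨0, .refl _ _⟩]
  set ν := volume.restrict (Icc (0 : ℝ) 1)
  set y' : {z // z ≠ x} := ⟨y, hxy.symm⟩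
  have hhops : ∏ z ∈ {y'}ᶜ, Measure.pi (fun _ : Bool => ν) (twoHopFailure p y z) ≤
      ENNReal.ofReal (1 - (p / 2) ^ 2) ^ (n - 2) :=
    calc ∏ z ∈ {y'}ᶜ, Measure.pi (fun _ : Bool => ν) (twoHopFailure p y z)
        ≤ ENNReal.ofReal (1 - (p / 2) ^ 2) ^ ({y'}ᶜ : Finset _).card :=
          Finset.prod_le_pow_card _ _ _ fun z hz => by
            have hzy : z.1 ≠ y := fun h => Finset.mem_compl.1 hz (by simp [y', ← h])
            simpa [twoHopFailure, hzy] using pi_compl_twoHopLabels_le hp0 hp1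
      _ = ENNReal.ofReal (1 - (p / 2) ^ 2) ^ (n - 2) := by
          simp [Finset.card_compl, Nat.sub_sub]
  calc rstgMeasure n {ω | ¬ TReach (presentGraph ω p) ω x y}
      ≤ rstgMeasure n {ω | ∀ z, (fun b => ω (twoHopEdge x y (z, b))) ∈ twoHopFailure p y z} :=
        measure_mono (setOf_not_tReach_subset hxy)
    _ = ∏ z, Measure.pi (fun _ : Bool => ν) (twoHopFailure p y z) :=
        pi_setOf_forall_block_mem _ (twoHopEdge_injective hxy) measurableSet_twoHopFailure
    _ = Measure.pi (fun _ : Bool => ν) (twoHopFailure p y y') *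
          ∏ z ∈ {y'}ᶜ, Measure.pi (fun _ : Bool => ν) (twoHopFailure p y z) :=
        Fintype.prod_eq_mul_prod_compl _ _
    _ ≤ ENNReal.ofReal (1 - p) * ENNReal.ofReal (1 - (p / 2) ^ 2) ^ (n - 2) := by
        gcongr
        simpa [twoHopFailure, y'] using pi_setOf_lt_apply_le false p
    _ = ENNReal.ofReal ((1 - p) * (1 - (p / 2) ^ 2) ^ (n - 2)) := by
        rw [ENNReal.ofReal_mul (by linarith), ENNReal.ofReal_pow (by nlinarith)]

theorem rstgMeasure_compl_setOf_forall_tReach_le {n : ℕ} {p : ℝ} (hp0 : 0 ≤ p) (hp1 : p ≤ 1) :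
    rstgMeasure n {ω | ∀ x y : Fin n, TReach (presentGraph ω p) ω x y}ᶜ ≤
      ENNReal.ofReal ((n : ℝ) ^ 2 * ((1 - p) * (1 - (p / 2) ^ 2) ^ (n - 2))) := by
  have hcompl : {ω | ∀ x y : Fin n, TReach (presentGraph ω p) ω x y}ᶜ =
      ⋃ x, ⋃ y, {ω | ¬ TReach (presentGraph ω p) ω x y} := by
    ext ω
    simp
  calc rstgMeasure n {ω | ∀ x y : Fin n, TReach (presentGraph ω p) ω x y}ᶜ
      ≤ ∑ x, ∑ y, rstgMeasure n {ω | ¬ TReach (presentGraph ω p) ω x y} := by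
        rw [hcompl]
        exact (measure_iUnion_fintype_le _ _).trans
          (Finset.sum_le_sum fun x _ => measure_iUnion_fintype_le _ _)
    _ ≤ ∑ _x : Fin n, ∑ _y : Fin n, ENNReal.ofReal ((1 - p) * (1 - (p / 2) ^ 2) ^ (n - 2)) := by
        gcongr with x _ y _
        exact rstgMeasure_not_tReach_le hp0 hp1 x y
    _ = ENNReal.ofReal ((n : ℝ) ^ 2 * ((1 - p) * (1 - (p / 2) ^ 2) ^ (n - 2))) := by
        simp only [Finset.sum_const, Finset.card_univ, Fintype.card_fin, nsmul_eq_mul]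
        rw [ENNReal.ofReal_mul (p := (n : ℝ) ^ 2) (by positivity),
          ENNReal.ofReal_pow (Nat.cast_nonneg n), ENNReal.ofReal_natCast, ← mul_assoc, ← sq]

theorem sq_mul_one_sub_mul_one_sub_sq_pow_le {n : ℕ} (hn : 2 ≤ n) {p : ℝ}
    (hp : p = Real.log n / √n) :
    (n : ℝ) ^ 2 * ((1 - p) * (1 - (p / 2) ^ 2) ^ (n - 2)) ≤
      (n : ℝ) ^ (-(Real.log n) / 4 + 2) := by
  have hn2 : (2 : ℝ) ≤ n := by exact_mod_cast hn
  obtain ⟨hp0, hp1⟩ : p ∈ Icc 0 1 := hp ▸ Real.log_div_sqrt_mem_Icc (by linarith)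
  have hnp : (n : ℝ) * p ^ 2 = Real.log n ^ 2 := by
    rw [hp, div_pow, Real.sq_sqrt (by linarith)]
    field_simp
  have hhop : 0 ≤ 1 - (p / 2) ^ 2 := by nlinarith
  have hdirect_exp := Real.one_sub_le_exp_neg p
  have hhop_exp := Real.one_sub_le_exp_neg ((p / 2) ^ 2)
  calc (n : ℝ) ^ 2 * ((1 - p) * (1 - (p / 2) ^ 2) ^ (n - 2))
      ≤ Real.exp (Real.log n) ^ 2 * (Real.exp (-p) * Real.exp (-(p / 2) ^ 2) ^ (n - 2)) := by
        rw [Real.exp_log (by linarith)]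
        gcongr
    _ = Real.exp (2 * Real.log n - p - (n - 2) * (p / 2) ^ 2) := by
        rw [← Real.exp_nat_mul, ← Real.exp_nat_mul, ← Real.exp_add, ← Real.exp_add,
          Nat.cast_sub hn]
        ring_nf
    _ ≤ Real.exp (Real.log n * (-(Real.log n) / 4 + 2)) := by
        gcongr
        nlinarith
    _ = (n : ℝ) ^ (-(Real.log n) / 4 + 2) := (Real.rpow_def_of_pos (by linarith) _).symm

/-- For the random simple temporal graph on `n ≥ 4` vertices with
edge probability `p = log(n)/√n`, the graph is temporally connected (every ordered
pair of vertices is joined by a temporal path) with probability at least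
`1 - n^{-(log n)/4 + 2}`. -/
theorem rstg_temporally_connected (n : ℕ) (hn : 4 ≤ n) (p : ℝ)
    (hp : p = Real.log n / Real.sqrt n) :
    ENNReal.ofReal (1 - (n : ℝ) ^ (-(Real.log n) / 4 + 2)) ≤
      rstgMeasure n {ω | ∀ x y : Fin n, TReach (presentGraph ω p) ω x y} := by
  obtain ⟨hp0, hp1⟩ : p ∈ Icc 0 1 := hp ▸ Real.log_div_sqrt_mem_Icc (by norm_cast; omega)
  refine ProbabilityTheory.ofReal_one_sub_le_of_measure_compl_le (by positivity) ?_
  exact (rstgMeasure_compl_setOf_forall_tReach_le hp0 hp1).trans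
    (ENNReal.ofReal_le_ofReal (sq_mul_one_sub_mul_one_sub_sq_pow_le (by omega) hp))
end

section
/- Let (w, x, y, z) be four distinct vertices forming a 'square' in a temporal graph: edge labels satisfy λ(wx), λ(yz) ∈ [p₁, p₂] and λ(xy), λ(wz) ∈ [p₂, p₃] with p₁ ≤ p₂ ≤ p₃. Then every vertex of the 4-cycle w–x–y–z–w can reach every other vertex of the cycle by a temporal path using only these four edges with labels in [p₁, p₃]. -/
/-- If four distinct vertices `w, x, y, z` form a "square", i.e.
`lab s(w,x), lab s(y,z) ∈ [p₁, p₂]` and `lab s(x,y), lab s(w,z) ∈ [p₂, p₃]` with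
`p₁ ≤ p₂ ≤ p₃`, then in the 4-cycle `w–x–y–z–w` every vertex reaches every other
vertex by a temporal path using only these four edges. -/
theorem square_temporally_connected {V : Type*} (w x y z : V)
    (hwx : w ≠ x) (hwy : w ≠ y) (hwz : w ≠ z) (hxy : x ≠ y) (hxz : x ≠ z) (hyz : y ≠ z)
    (lab : Sym2 V → ℝ) (p₁ p₂ p₃ : ℝ) (h12 : p₁ ≤ p₂) (h23 : p₂ ≤ p₃)
    (hl_wx : lab s(w, x) ∈ Set.Icc p₁ p₂) (hl_yz : lab s(y, z) ∈ Set.Icc p₁ p₂)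
    (hl_xy : lab s(x, y) ∈ Set.Icc p₂ p₃) (hl_wz : lab s(w, z) ∈ Set.Icc p₂ p₃) :
    ∀ a ∈ ({w, x, y, z} : Set V), ∀ b ∈ ({w, x, y, z} : Set V),
      TReach (SimpleGraph.fromEdgeSet {s(w, x), s(x, y), s(y, z), s(z, w)}) lab a b := by
  set G := SimpleGraph.fromEdgeSet {s(w, x), s(x, y), s(y, z), s(z, w)} with hG
  have awx : G.Adj w x := by simp [hG, SimpleGraph.fromEdgeSet_adj, hwx]
  have axy : G.Adj x y := by simp [hG, SimpleGraph.fromEdgeSet_adj, hxy]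
  have ayz : G.Adj y z := by simp [hG, SimpleGraph.fromEdgeSet_adj, hyz]
  have azw : G.Adj z w := by simp [hG, SimpleGraph.fromEdgeSet_adj, hwz.symm]
  have axw := awx.symm
  have ayx := axy.symm
  have azy := ayz.symm
  have awz := azw.symm
  have lxw : lab s(x, w) = lab s(w, x) := by rw [Sym2.eq_swap]
  have lyx : lab s(y, x) = lab s(x, y) := by rw [Sym2.eq_swap]
  have lzy : lab s(z, y) = lab s(y, z) := by rw [Sym2.eq_swap]
  have lzw : lab s(z, w) = lab s(w, z) := by rw [Sym2.eq_swap]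
  have Rwx : TReach G lab w x := ⟨p₁, .step awx hl_wx.1 (.refl _ _)⟩
  have Rwz : TReach G lab w z := ⟨p₂, .step awz hl_wz.1 (.refl _ _)⟩
  have Rwy : TReach G lab w y :=
    ⟨p₁, .step awx hl_wx.1 (.step axy (hl_wx.2.trans hl_xy.1) (.refl _ _))⟩
  have Rxw : TReach G lab x w := ⟨p₁, .step axw (lxw ▸ hl_wx.1) (.refl _ _)⟩
  have Rxy : TReach G lab x y := ⟨p₂, .step axy hl_xy.1 (.refl _ _)⟩
  have Rxz : TReach G lab x z :=
    ⟨p₁, .step axw (lxw ▸ hl_wx.1)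
      (.step awz ((lxw.le.trans hl_wx.2).trans hl_wz.1) (.refl _ _))⟩
  have Ryx : TReach G lab y x := ⟨p₂, .step ayx (lyx ▸ hl_xy.1) (.refl _ _)⟩
  have Ryz : TReach G lab y z := ⟨p₁, .step ayz hl_yz.1 (.refl _ _)⟩
  have Ryw : TReach G lab y w :=
    ⟨p₁, .step ayz hl_yz.1
      (.step azw (by rw [lzw]; exact hl_yz.2.trans hl_wz.1) (.refl _ _))⟩
  have Rzy : TReach G lab z y := ⟨p₁, .step azy (lzy ▸ hl_yz.1) (.refl _ _)⟩
  have Rzw : TReach G lab z w := ⟨p₂, .step azw (lzw ▸ hl_wz.1) (.refl _ _)⟩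
  have Rzx : TReach G lab z x :=
    ⟨p₁, .step azy (lzy ▸ hl_yz.1)
      (.step ayx (by rw [lzy, lyx]; exact hl_yz.2.trans hl_xy.1) (.refl _ _))⟩
  intro a ha b hb
  simp only [Set.mem_insert_iff, Set.mem_singleton_iff] at ha hb
  rcases ha with rfl | rfl | rfl | rfl <;> rcases hb with rfl | rfl | rfl | rfl <;>
    first
      | exact ⟨0, .refl 0 _⟩
      | assumption
end
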